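/- Let K be a nontrivial semiring (0 ≠ 1), n ≥ 1, and M_1,…,M_k ∈ K^{n×n}. Define (n+1)×(n+1) matrices over K: for 1 ≤ i ≤ k, A_i has entry 1 in the top-left corner, the block M_i in the bottom-right n×n block, and zeros elsewhere in the first row and first column; A_0 has entry 1 in the top-left corner, zeros in the rest of the first row, all entries 1 in the rest of the first column, and the n×n identity matrix in the bottom-right block. Then the following are equivalent: (i) the n×n zero matrix belongs to the submonoid of K^{n×n} generated by {M_1,…,M_k}; (ii) the set {A_0, A_1,…,A_k} is synchronizable; (iii) the set {A_0, A_1,…,A_k} is location synchronizable. -/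

import Mathlib

/-- A matrix is *location synchronizing* if there is a column index `i` such that an entry
`A j k` is nonzero exactly when `k = i`. -/
def IsLocSync {K : Type*} [Semiring K] {ι : Type*} (A : Matrix ι ι K) : Prop :=
  ∃ i, ∀ j k, A j k ≠ 0 ↔ k = i

/-- A matrix is *synchronizing* if it is location synchronizing and all entries of the
designated column coincide. -/
def IsSync {K : Type*} [Semiring K] {ι : Type*} (A : Matrix ι ι K) : Prop :=
  ∃ i, (∀ j k, A j k ≠ 0 ↔ k = i) ∧ (∀ j j', A j i = A j' i)

/-- A set of matrices is *synchronizable* if some nonempty finite product of its elements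
(with repetitions allowed) is synchronizing. -/
def IsSynchronizable {K : Type*} [Semiring K] {ι : Type*} [Fintype ι] [DecidableEq ι]
    (S : Set (Matrix ι ι K)) : Prop :=
  ∃ l : List (Matrix ι ι K), l ≠ [] ∧ (∀ A ∈ l, A ∈ S) ∧ IsSync l.prod

/-- A set of matrices is *location synchronizable* if some nonempty finite product of its
elements (with repetitions allowed) is location synchronizing. -/
def IsLocSynchronizable {K : Type*} [Semiring K] {ι : Type*} [Fintype ι] [DecidableEq ι]
    (S : Set (Matrix ι ι K)) : Prop :=
  ∃ l : List (Matrix ι ι K), l ≠ [] ∧ (∀ A ∈ l, A ∈ S) ∧ IsLocSync l.prod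

/-- `A_i`: entry `1` in the top-left corner, the block `M` in the bottom-right `n × n`
block, zeros elsewhere in the first row and first column. -/
def liftMat {K : Type*} [Semiring K] {n : ℕ} (M : Matrix (Fin n) (Fin n) K) :
    Matrix (Fin 1 ⊕ Fin n) (Fin 1 ⊕ Fin n) K :=
  Matrix.fromBlocks 1 0 0 M

/-- `A_0`: entry `1` in the top-left corner, zeros in the rest of the first row, all
entries `1` in the rest of the first column, and the identity in the bottom-right block. -/
def resetMat (K : Type*) [Semiring K] (n : ℕ) :
    Matrix (Fin 1 ⊕ Fin n) (Fin 1 ⊕ Fin n) K :=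
  Matrix.fromBlocks 1 0 (Matrix.of fun _ _ => 1) 1

/-!
Every generator has the block shape `fromBlocks 1 0 C D` with `D` in the monoid generated by
the `M i`, and these matrices are closed under multiplication. The nonzero top-left corner
forces a location synchronizing product to concentrate on the first column, so its lower-right
block vanishes. Conversely, if a product of the `M i` is zero, prefixing `A_0` to the
corresponding product of the `A_i` gives a matrix whose only nonzero column is the first one,
filled with ones.
-/

namespace Matrix

variable {K : Type*} [Semiring K]

theorem IsSync.isLocSync {ι : Type*} {A : Matrix ι ι K} (h : IsSync A) : IsLocSync A :=
  let ⟨i, hi, _⟩ := h; ⟨i, hi⟩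

theorem isSync_of_single_col {ι : Type*} [DecidableEq ι] [Nontrivial K] (i : ι) :
    IsSync (of fun _ k => if k = i then (1 : K) else 0) :=
  ⟨i, fun _ k => by by_cases hk : k = i <;> simp [hk], fun _ _ => rfl⟩

section Blocks

variable {m n : Type*} [Fintype m] [Fintype n] [DecidableEq m] [DecidableEq n]

def blockLowerUnitriangular (N : Submonoid (Matrix n n K)) :
    Submonoid (Matrix (m ⊕ n) (m ⊕ n) K) where
  carrier := {A | ∃ C D, D ∈ N ∧ A = fromBlocks 1 0 C D}
  one_mem' := ⟨0, 1, N.one_mem, fromBlocks_one.symm⟩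
  mul_mem' := by
    rintro _ _ ⟨C, D, hD, rfl⟩ ⟨C', D', hD', rfl⟩
    exact ⟨C + D * C', D * D', N.mul_mem hD hD', by simp [fromBlocks_multiply]⟩

variable (m) in
def fromBlocksOneHom : Matrix n n K →* Matrix (m ⊕ n) (m ⊕ n) K where
  toFun D := fromBlocks 1 0 0 D
  map_one' := fromBlocks_one
  map_mul' D D' := by simp [fromBlocks_multiply]

end Blocks

theorem eq_zero_of_isLocSync_fromBlocks_one_zero {m n : Type*} [DecidableEq m] [Nonempty m]
    [Nontrivial K] {C : Matrix n m K} {D : Matrix n n K} (h : IsLocSync (fromBlocks 1 0 C D)) :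
    D = 0 := by
  obtain ⟨i, hi⟩ := h
  obtain ⟨a⟩ := ‹Nonempty m›
  have hia : Sum.inl a = i := (hi (.inl a) (.inl a)).mp (by simp)
  ext x y
  by_contra hxy
  exact Sum.inr_ne_inl ((hi (.inr x) (.inr y)).mp hxy |>.trans hia.symm)

theorem isSynchronizable_of_mul_mem_closure {ι : Type*} [Fintype ι] [DecidableEq ι]
    {S : Set (Matrix ι ι K)} {A B : Matrix ι ι K} (hA : A ∈ S)
    (hB : B ∈ Submonoid.closure S) (h : IsSync (A * B)) : IsSynchronizable S := by
  obtain ⟨l, hl, rfl⟩ := Submonoid.exists_list_of_mem_closure hB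
  exact ⟨A :: l, List.cons_ne_nil _ _, by simpa using ⟨hA, hl⟩, by simpa using h⟩

end Matrix

open Matrix

theorem resetMat_mul_liftMat_zero {K : Type*} [Semiring K] (n : ℕ) :
    resetMat K n * liftMat 0 = of fun _ k => if k = Sum.inl 0 then (1 : K) else 0 := by
  ext j (k | k) <;> cases j <;> simp [resetMat, liftMat, fromBlocks_multiply, Fin.fin_one_eq_zero]

theorem mortality_iff_sync_iff_locSync_general {K : Type*} [Semiring K] (hK : (0 : K) ≠ 1)
    {n k : ℕ} (M : Fin k → Matrix (Fin n) (Fin n) K) :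
    ((0 : Matrix (Fin n) (Fin n) K) ∈ Submonoid.closure (Set.range M) ↔
        IsSynchronizable (insert (resetMat K n) (Set.range fun i => liftMat (M i)))) ∧
      (IsSynchronizable (insert (resetMat K n) (Set.range fun i => liftMat (M i))) ↔
        IsLocSynchronizable (insert (resetMat K n) (Set.range fun i => liftMat (M i)))) := by
  have : Nontrivial K := ⟨⟨0, 1, hK⟩⟩
  set S := insert (resetMat K n) (Set.range fun i => liftMat (M i))
  have mortal_sync (h0 : (0 : Matrix (Fin n) (Fin n) K) ∈ Submonoid.closure (Set.range M)) :
      IsSynchronizable S := by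
    have hlift : liftMat 0 ∈ Submonoid.closure S := by
      have := Submonoid.mem_map_of_mem (fromBlocksOneHom (Fin 1)) h0
      rw [MonoidHom.map_mclosure, ← Set.range_comp] at this
      exact Submonoid.closure_mono (Set.subset_insert _ _) this
    refine isSynchronizable_of_mul_mem_closure (Set.mem_insert _ _) hlift ?_
    rw [resetMat_mul_liftMat_zero]
    exact isSync_of_single_col _
  have locSync_mortal : IsLocSynchronizable S →
      (0 : Matrix (Fin n) (Fin n) K) ∈ Submonoid.closure (Set.range M) := by
    rintro ⟨l, -, hl, hsync⟩
    have hS : S ⊆ blockLowerUnitriangular (m := Fin 1) (Submonoid.closure (Set.range M)) := by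
      rintro _ (rfl | ⟨i, rfl⟩)
      · exact ⟨_, _, one_mem _, rfl⟩
      · exact ⟨_, _, Submonoid.subset_closure ⟨i, rfl⟩, rfl⟩
    obtain ⟨C, D, hD, hprod⟩ := Submonoid.list_prod_mem _ fun A hA => hS (hl A hA)
    rw [hprod] at hsync
    rwa [← eq_zero_of_isLocSync_fromBlocks_one_zero hsync]
  have sync_locSync : IsSynchronizable S → IsLocSynchronizable S :=
    fun ⟨l, hne, hl, h⟩ => ⟨l, hne, hl, h.isLocSync⟩
  exact ⟨⟨mortal_sync, locSync_mortal ∘ sync_locSync⟩,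
    ⟨sync_locSync, mortal_sync ∘ locSync_mortal⟩⟩

/-- Over a nontrivial semiring `K`, the following are equivalent: (i) the zero matrix is a
product of the `M i`; (ii) `{A_0, A_1, …, A_k}` is synchronizable; (iii) `{A_0, A_1, …, A_k}`
is location synchronizable. -/
theorem mortality_iff_sync_iff_locSync {K : Type*} [Semiring K] (hK : (0 : K) ≠ 1)
    {n k : ℕ} (hn : 1 ≤ n) (M : Fin k → Matrix (Fin n) (Fin n) K) :
    ((0 : Matrix (Fin n) (Fin n) K) ∈ Submonoid.closure (Set.range M) ↔
        IsSynchronizable (insert (resetMat K n) (Set.range fun i => liftMat (M i)))) ∧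
      (IsSynchronizable (insert (resetMat K n) (Set.range fun i => liftMat (M i))) ↔
        IsLocSynchronizable (insert (resetMat K n) (Set.range fun i => liftMat (M i)))) :=
  mortality_iff_sync_iff_locSync_general hK M
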